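/- Let Z = (Z_k)_{k≥0} be a nested family of normed spaces over K. The three cases (I), (II), (III) defining a strict expansion are mutually exclusive: no sequence (v_n)_{n≥1} in Z_0 can simultaneously satisfy two of the three cases (in particular, a sequence cannot have both a trivial strict expansion and a finite one, both a trivial and an infinite one, or both a finite and an infinite one). -/

import Mathlib

open Filter

section ExpansionDefs

variable (𝕜 : Type*) [RCLike 𝕜] {E : Type*} [AddCommGroup E] [Module 𝕜 E]

/-- The set `S ⊆ E`, equipped with the norm function `nrm`, is a normed space over `𝕜`. -/
def IsNormedSubspace (S : Set E) (nrm : E → ℝ) : Prop :=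
  (0 : E) ∈ S ∧ (∀ x ∈ S, ∀ y ∈ S, x + y ∈ S) ∧ (∀ c : 𝕜, ∀ x ∈ S, c • x ∈ S) ∧
    (∀ x ∈ S, 0 ≤ nrm x) ∧ (∀ x ∈ S, (nrm x = 0 ↔ x = 0)) ∧
    (∀ x ∈ S, ∀ y ∈ S, nrm (x + y) ≤ nrm x + nrm y) ∧
    ∀ c : 𝕜, ∀ x ∈ S, nrm (c • x) = ‖c‖ * nrm x

/-- `Z` together with the norms `nrm` is a nested family
`Z₀ ⊆ Z₁ ⊆ ⋯` of normed spaces over `𝕜` with continuous embeddings. -/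
def IsNestedFamily (Z : ℕ → Set E) (nrm : ℕ → E → ℝ) : Prop :=
  (∀ k, IsNormedSubspace 𝕜 (Z k) (nrm k)) ∧ (∀ k, Z k ⊆ Z (k + 1)) ∧
    ∀ k, ∃ C > 0, ∀ x ∈ Z k, nrm (k + 1) x ≤ C * nrm k x

/-- Every embedding `Z k ⊆ Z (k+1)` is compact: every bounded sequence in `Z k`
has a subsequence converging, in the norm of `Z (k+1)`, to an element of `Z (k+1)`. -/
def HasCompactEmbeddings {E : Type*} [AddCommGroup E] (Z : ℕ → Set E) (nrm : ℕ → E → ℝ) :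
    Prop :=
  ∀ (k : ℕ) (u : ℕ → E), (∀ n, u n ∈ Z k) → (∃ M, ∀ n, nrm k (u n) ≤ M) →
    ∃ ψ : ℕ → ℕ, StrictMono ψ ∧
      ∃ x ∈ Z (k + 1), Tendsto (fun n => nrm (k + 1) (u (ψ n) - x)) atTop (nhds 0)

/-- The partial sum `∑_{j=1}^m Γ_{j,n} w_j` (real coefficients acting through `𝕜`). -/
noncomputable def expPartialSum (w : ℕ → E) (Γ : ℕ → ℕ → ℝ) (m n : ℕ) : E :=
  ∑ j ∈ Finset.Icc 1 m, algebraMap ℝ 𝕜 (Γ j n) • w j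

/-- Case (I) of a strict expansion: the trivial expansion. -/
def StrictCaseI {E : Type*} [AddCommGroup E] (Z : ℕ → Set E) (v : ℕ → E) (c : E) : Prop :=
  c ∈ Z 0 ∧ ∀ n, v n = c

/-- Case (II) of a strict expansion: a finite expansion with `K0 ≥ 1` terms. -/
def StrictCaseII (Z : ℕ → Set E) (nrm : ℕ → E → ℝ) (v : ℕ → E) (c : E) (K0 : ℕ)
    (w : ℕ → E) (wn : ℕ → ℕ → E) (Γ : ℕ → ℕ → ℝ) : Prop :=
  1 ≤ K0 ∧ c ∈ Z 0 ∧
    (∀ k, 1 ≤ k → k ≤ K0 → w k ∈ Z k) ∧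
    (∀ k, 1 ≤ k → k ≤ K0 → ∀ n, wn k n ∈ Z (k - 1)) ∧
    (∀ k, 1 ≤ k → k ≤ K0 → ∀ n, 0 < Γ k n) ∧
    Tendsto (fun n => Γ 1 n) atTop (nhds 0) ∧
    (∀ k, 1 ≤ k → k < K0 → Tendsto (fun n => Γ (k + 1) n / Γ k n) atTop (nhds 0)) ∧
    (∀ k, 1 ≤ k → k ≤ K0 → Tendsto (fun n => nrm k (wn k n - w k)) atTop (nhds 0)) ∧
    (∀ k, 1 ≤ k → k ≤ K0 → ∀ n, nrm (k - 1) (wn k n) = 1) ∧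
    (∀ k, 1 ≤ k → k ≤ K0 → ∀ n,
      v n = c + expPartialSum 𝕜 w Γ (k - 1) n + algebraMap ℝ 𝕜 (Γ k n) • wn k n) ∧
    ∀ n, wn K0 n = w K0

/-- Case (III) of a strict expansion: an infinite expansion. -/
def StrictCaseIII (Z : ℕ → Set E) (nrm : ℕ → E → ℝ) (v : ℕ → E) (c : E)
    (w : ℕ → E) (wn : ℕ → ℕ → E) (Γ : ℕ → ℕ → ℝ) (Nk : ℕ → ℕ) : Prop :=
  c ∈ Z 0 ∧
    (∀ k, 1 ≤ k → w k ∈ Z k) ∧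
    (∀ k, 1 ≤ k → ∀ n, wn k n ∈ Z (k - 1)) ∧
    (∀ k, 1 ≤ k → ∀ n, 0 < Γ k n) ∧
    (∀ k, 1 ≤ k → 1 ≤ Nk k) ∧
    Tendsto (fun n => Γ 1 n) atTop (nhds 0) ∧
    (∀ k, 1 ≤ k → Tendsto (fun n => Γ (k + 1) n / Γ k n) atTop (nhds 0)) ∧
    (∀ k, 1 ≤ k → Tendsto (fun n => nrm k (wn k n - w k)) atTop (nhds 0)) ∧
    (∀ k, 1 ≤ k → ∀ n,
      v n = c + expPartialSum 𝕜 w Γ (k - 1) n + algebraMap ℝ 𝕜 (Γ k n) • wn k n) ∧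
    ∀ k, 1 ≤ k → ∀ n, Nk k ≤ n → nrm (k - 1) (wn k n) = 1

/-- The strict expansion `v_n ≈ c + ∑_{k ∈ N} Γ_{k,n} w_k` with explicit data:
the index set `N` is `∅` in case (I), `{1, …, K0}` in case (II) and `{k | k ≥ 1}`
in case (III). -/
def StrictExpansionWith (Z : ℕ → Set E) (nrm : ℕ → E → ℝ) (v : ℕ → E) (c : E) (N : Set ℕ)
    (w : ℕ → E) (wn : ℕ → ℕ → E) (Γ : ℕ → ℕ → ℝ) (Nk : ℕ → ℕ) : Prop :=
  (N = ∅ ∧ StrictCaseI Z v c) ∨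
    (∃ K0 : ℕ, N = Set.Icc 1 K0 ∧ StrictCaseII 𝕜 Z nrm v c K0 w wn Γ) ∨
    (N = {k : ℕ | 1 ≤ k} ∧ StrictCaseIII 𝕜 Z nrm v c w wn Γ Nk)

/-- `v` possesses a strict expansion in the nested family `(Z, nrm)`. -/
def HasStrictExpansion (Z : ℕ → Set E) (nrm : ℕ → E → ℝ) (v : ℕ → E) : Prop :=
  ∃ (c : E) (N : Set ℕ) (w : ℕ → E) (wn : ℕ → ℕ → E) (Γ : ℕ → ℕ → ℝ) (Nk : ℕ → ℕ),
    StrictExpansionWith 𝕜 Z nrm v c N w wn Γ Nk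

/-- Case (II) of a relaxed expansion: unit-norm conditions dropped, `w K0 ≠ 0` required. -/
def RelaxedCaseII (Z : ℕ → Set E) (nrm : ℕ → E → ℝ) (v : ℕ → E) (c : E) (K0 : ℕ)
    (w : ℕ → E) (wn : ℕ → ℕ → E) (Γ : ℕ → ℕ → ℝ) : Prop :=
  1 ≤ K0 ∧ c ∈ Z 0 ∧
    (∀ k, 1 ≤ k → k ≤ K0 → w k ∈ Z k) ∧
    (∀ k, 1 ≤ k → k ≤ K0 → ∀ n, wn k n ∈ Z (k - 1)) ∧
    (∀ k, 1 ≤ k → k ≤ K0 → ∀ n, 0 < Γ k n) ∧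
    Tendsto (fun n => Γ 1 n) atTop (nhds 0) ∧
    (∀ k, 1 ≤ k → k < K0 → Tendsto (fun n => Γ (k + 1) n / Γ k n) atTop (nhds 0)) ∧
    (∀ k, 1 ≤ k → k ≤ K0 → Tendsto (fun n => nrm k (wn k n - w k)) atTop (nhds 0)) ∧
    (∀ k, 1 ≤ k → k ≤ K0 → ∀ n,
      v n = c + expPartialSum 𝕜 w Γ (k - 1) n + algebraMap ℝ 𝕜 (Γ k n) • wn k n) ∧
    (∀ n, wn K0 n = w K0) ∧ w K0 ≠ 0

/-- Case (III) of a relaxed expansion: unit-norm conditions dropped. -/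
def RelaxedCaseIII (Z : ℕ → Set E) (nrm : ℕ → E → ℝ) (v : ℕ → E) (c : E)
    (w : ℕ → E) (wn : ℕ → ℕ → E) (Γ : ℕ → ℕ → ℝ) : Prop :=
  c ∈ Z 0 ∧
    (∀ k, 1 ≤ k → w k ∈ Z k) ∧
    (∀ k, 1 ≤ k → ∀ n, wn k n ∈ Z (k - 1)) ∧
    (∀ k, 1 ≤ k → ∀ n, 0 < Γ k n) ∧
    Tendsto (fun n => Γ 1 n) atTop (nhds 0) ∧
    (∀ k, 1 ≤ k → Tendsto (fun n => Γ (k + 1) n / Γ k n) atTop (nhds 0)) ∧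
    (∀ k, 1 ≤ k → Tendsto (fun n => nrm k (wn k n - w k)) atTop (nhds 0)) ∧
    ∀ k, 1 ≤ k → ∀ n,
      v n = c + expPartialSum 𝕜 w Γ (k - 1) n + algebraMap ℝ 𝕜 (Γ k n) • wn k n

/-- A relaxed expansion `v_n ≈ c + ∑_{k ∈ N} Γ_{k,n} w_k` with explicit data. -/
def RelaxedExpansionWith (Z : ℕ → Set E) (nrm : ℕ → E → ℝ) (v : ℕ → E) (c : E) (N : Set ℕ)
    (w : ℕ → E) (wn : ℕ → ℕ → E) (Γ : ℕ → ℕ → ℝ) : Prop :=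
  (N = ∅ ∧ StrictCaseI Z v c) ∨
    (∃ K0 : ℕ, N = Set.Icc 1 K0 ∧ RelaxedCaseII 𝕜 Z nrm v c K0 w wn Γ) ∨
    (N = {k : ℕ | 1 ≤ k} ∧ RelaxedCaseIII 𝕜 Z nrm v c w wn Γ)

/-- `v` has a unitary expansion with limit `c`: a relaxed expansion in which
`‖w_k‖_{Z_k} = 1` for every `k ∈ N`. -/
def UnitaryExpansionFrom (Z : ℕ → Set E) (nrm : ℕ → E → ℝ) (v : ℕ → E) (c : E) : Prop :=
  ∃ (N : Set ℕ) (w : ℕ → E) (wn : ℕ → ℕ → E) (Γ : ℕ → ℕ → ℝ),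
    RelaxedExpansionWith 𝕜 Z nrm v c N w wn Γ ∧ ∀ k ∈ N, nrm k (w k) = 1

/-- `v` has a degenerate expansion with limit `c`: an infinite relaxed expansion
in which either all `w_k = 0`, or `‖w_k‖_{Z_k} = 1` for `1 ≤ k ≤ N0` and `w_k = 0`
for `k > N0`. -/
def DegenerateExpansionFrom (Z : ℕ → Set E) (nrm : ℕ → E → ℝ) (v : ℕ → E) (c : E) : Prop :=
  ∃ (w : ℕ → E) (wn : ℕ → ℕ → E) (Γ : ℕ → ℕ → ℝ),
    RelaxedCaseIII 𝕜 Z nrm v c w wn Γ ∧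
      ((∀ k, 1 ≤ k → w k = 0) ∨
        ∃ N0 : ℕ, 1 ≤ N0 ∧ (∀ k, 1 ≤ k → k ≤ N0 → nrm k (w k) = 1) ∧ ∀ k, N0 < k → w k = 0)

end ExpansionDefs


/-!
After `k` terms, the remainder `v_n - v - ∑_{j ≤ k} Γ_{j,n} w_j` of a finite or infinite strict
expansion equals `Γ_{k+1,n} w_{k+1,n}` with `‖w_{k+1,n}‖_{Z_k} = 1` (eventually), so its
`Z_k`-norm is `Γ_{k+1,n} > 0`. Two such expansions of one sequence therefore agree term by term:
their limits `v` coincide since `Γ_{1,n} → 0`, and once the remainders after `k` terms agree,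
comparing their `Z_k`-norms gives `Γ_{k+1,n} = Γ'_{k+1,n}`, hence `w_{k+1,n} = w'_{k+1,n}`, hence
`w_{k+1} = w'_{k+1}` by uniqueness of limits in `Z_{k+1}`. A trivial expansion has remainder `0`
after `0` terms and a finite one with `K0` terms has remainder `0` after `K0` terms, while the
remainders of an infinite expansion never vanish eventually.
-/

open Topology

namespace IsNormedSubspace

variable {𝕜 : Type*} [RCLike 𝕜] {E : Type*} [AddCommGroup E] [Module 𝕜 E]
  {S : Set E} {nr : E → ℝ}

lemma nrm_zero (h : IsNormedSubspace 𝕜 S nr) : nr 0 = 0 := (h.2.2.2.2.1 0 h.1).mpr rfl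

lemma add_mem (h : IsNormedSubspace 𝕜 S nr) {x y : E} (hx : x ∈ S) (hy : y ∈ S) :
    x + y ∈ S :=
  h.2.1 x hx y hy

lemma smul_mem (h : IsNormedSubspace 𝕜 S nr) (a : 𝕜) {x : E} (hx : x ∈ S) : a • x ∈ S :=
  h.2.2.1 a x hx

lemma sub_mem (h : IsNormedSubspace 𝕜 S nr) {x y : E} (hx : x ∈ S) (hy : y ∈ S) :
    x - y ∈ S := by
  simpa [sub_eq_add_neg] using h.add_mem hx (h.smul_mem (-1) hy)

lemma nrm_algebraMap_smul (h : IsNormedSubspace 𝕜 S nr) (r : ℝ) {x : E} (hx : x ∈ S) :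
    nr (algebraMap ℝ 𝕜 r • x) = |r| * nr x := by
  rw [h.2.2.2.2.2.2 _ x hx, norm_algebraMap', Real.norm_eq_abs]

lemma nrm_sub_comm (h : IsNormedSubspace 𝕜 S nr) {x y : E} (hx : x ∈ S) (hy : y ∈ S) :
    nr (x - y) = nr (y - x) := by
  simpa using (h.2.2.2.2.2.2 (-1) (x - y) (h.sub_mem hx hy)).symm

lemma nrm_sub_le (h : IsNormedSubspace 𝕜 S nr) {x y z : E} (hx : x ∈ S) (hy : y ∈ S)
    (hz : z ∈ S) : nr (x - y) ≤ nr (z - x) + nr (z - y) := by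
  rw [← h.nrm_sub_comm hx hz, show x - y = (x - z) + (z - y) by abel]
  exact h.2.2.2.2.2.1 _ (h.sub_mem hx hz) _ (h.sub_mem hz hy)

lemma eq_of_tendsto (h : IsNormedSubspace 𝕜 S nr) {a : ℕ → E} (ha : ∀ n, a n ∈ S)
    {x y : E} (hx : x ∈ S) (hy : y ∈ S)
    (hax : Tendsto (fun n => nr (a n - x)) atTop (𝓝 0))
    (hay : Tendsto (fun n => nr (a n - y)) atTop (𝓝 0)) : x = y := by
  have hxy := h.sub_mem hx hy
  have hle : nr (x - y) ≤ 0 := by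
    simpa using ge_of_tendsto' (hax.add hay) fun n => h.nrm_sub_le hx hy (ha n)
  exact sub_eq_zero.mp ((h.2.2.2.2.1 _ hxy).mp (le_antisymm hle (h.2.2.2.1 _ hxy)))

lemma eq_of_smul_eq_smul (h : IsNormedSubspace 𝕜 S nr) {x y : E} (hx : x ∈ S) (hy : y ∈ S)
    (hnx : nr x = 1) (hny : nr y = 1) {a b : ℝ} (ha : 0 < a) (hb : 0 < b)
    (hxy : algebraMap ℝ 𝕜 a • x = algebraMap ℝ 𝕜 b • y) : a = b ∧ x = y := by
  have hab : a = b := by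
    simpa [h.nrm_algebraMap_smul _ hx, h.nrm_algebraMap_smul _ hy, hnx, hny, abs_of_pos ha,
      abs_of_pos hb] using congrArg nr hxy
  subst hab
  exact ⟨rfl, smul_right_injective E (RCLike.ofReal_ne_zero.mpr ha.ne') hxy⟩

end IsNormedSubspace

section Remainder

variable (𝕜 : Type*) [RCLike 𝕜] {E : Type*} [AddCommGroup E] [Module 𝕜 E]

noncomputable def expRemainder (v : ℕ → E) (c : E) (w : ℕ → E) (Γ : ℕ → ℕ → ℝ) (m n : ℕ) : E :=
  v n - c - expPartialSum 𝕜 w Γ m n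

variable {𝕜} {v : ℕ → E} {c : E} {w : ℕ → E} {Γ : ℕ → ℕ → ℝ}

lemma expRemainder_zero (n : ℕ) : expRemainder 𝕜 v c w Γ 0 n = v n - c := by
  simp [expRemainder, expPartialSum]

lemma expRemainder_succ (m n : ℕ) :
    expRemainder 𝕜 v c w Γ (m + 1) n
      = expRemainder 𝕜 v c w Γ m n - algebraMap ℝ 𝕜 (Γ (m + 1) n) • w (m + 1) := by
  rw [expRemainder, expRemainder, expPartialSum, Finset.sum_Icc_succ_top (by omega), ← sub_sub,
    expPartialSum]

lemma expRemainder_eq_iff {m n : ℕ} {x : E} :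
    expRemainder 𝕜 v c w Γ m n = x ↔ v n = c + expPartialSum 𝕜 w Γ m n + x := by
  rw [expRemainder, sub_sub, sub_eq_iff_eq_add']

end Remainder

section Expansion

variable (𝕜 : Type*) [RCLike 𝕜] {E : Type*} [AddCommGroup E] [Module 𝕜 E]

/-- The first `K` terms of a finite or infinite strict expansion, with the unit-norm condition
required only eventually, as in case (III). -/
structure ExpandsUpTo (Z : ℕ → Set E) (nrm : ℕ → E → ℝ) (v : ℕ → E) (c : E) (w : ℕ → E)
    (wn : ℕ → ℕ → E) (Γ : ℕ → ℕ → ℝ) (K : ℕ) : Prop where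
  tendsto_coeff_one : Tendsto (Γ 1) atTop (𝓝 0)
  center_mem : c ∈ Z 0
  term_mem : ∀ k < K, w (k + 1) ∈ Z (k + 1)
  approx_mem : ∀ k < K, ∀ n, wn (k + 1) n ∈ Z k
  coeff_pos : ∀ k < K, ∀ n, 0 < Γ (k + 1) n
  tendsto_approx : ∀ k < K, Tendsto (fun n => nrm (k + 1) (wn (k + 1) n - w (k + 1))) atTop (𝓝 0)
  eventually_nrm_approx : ∀ k < K, ∀ᶠ n in atTop, nrm k (wn (k + 1) n) = 1
  expRemainder_eq : ∀ k < K, ∀ n,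
    expRemainder 𝕜 v c w Γ k n = algebraMap ℝ 𝕜 (Γ (k + 1) n) • wn (k + 1) n

variable {𝕜} {Z : ℕ → Set E} {nrm : ℕ → E → ℝ} {v : ℕ → E} {c c' : E} {K0 : ℕ}
  {w w' : ℕ → E} {wn wn' : ℕ → ℕ → E} {Γ Γ' : ℕ → ℕ → ℝ} {Nk : ℕ → ℕ}

lemma StrictCaseII.expandsUpTo (h : StrictCaseII 𝕜 Z nrm v c K0 w wn Γ) :
    ExpandsUpTo 𝕜 Z nrm v c w wn Γ K0 := by
  obtain ⟨-, hc, hw, hwn, hpos, hΓ1, -, htend, hunit, heq, -⟩ := h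
  exact ⟨hΓ1, hc, fun k hk => hw (k + 1) (by omega) hk, fun k hk => hwn (k + 1) (by omega) hk,
    fun k hk => hpos (k + 1) (by omega) hk, fun k hk => htend (k + 1) (by omega) hk,
    fun k hk => .of_forall (hunit (k + 1) (by omega) hk),
    fun k hk n => expRemainder_eq_iff.mpr (heq (k + 1) (by omega) hk n)⟩

lemma StrictCaseII.expRemainder_eq_zero (h : StrictCaseII 𝕜 Z nrm v c K0 w wn Γ) (n : ℕ) :
    expRemainder 𝕜 v c w Γ K0 n = 0 := by
  obtain ⟨k, rfl⟩ : ∃ k, K0 = k + 1 := ⟨K0 - 1, by have := h.1; omega⟩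
  rw [expRemainder_succ, h.expandsUpTo.expRemainder_eq k k.lt_succ_self,
    h.2.2.2.2.2.2.2.2.2.2 n, sub_self]

lemma StrictCaseIII.expandsUpTo (h : StrictCaseIII 𝕜 Z nrm v c w wn Γ Nk) (K : ℕ) :
    ExpandsUpTo 𝕜 Z nrm v c w wn Γ K := by
  obtain ⟨hc, hw, hwn, hpos, -, hΓ1, -, htend, heq, hunit⟩ := h
  exact ⟨hΓ1, hc, fun k _ => hw (k + 1) (by omega), fun k _ => hwn (k + 1) (by omega),
    fun k _ => hpos (k + 1) (by omega), fun k _ => htend (k + 1) (by omega),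
    fun k _ => eventually_atTop.mpr ⟨Nk (k + 1), hunit (k + 1) (by omega)⟩,
    fun k _ n => expRemainder_eq_iff.mpr (heq (k + 1) (by omega) n)⟩

namespace ExpandsUpTo

variable {K K' : ℕ}

lemma eventually_nrm_expRemainder (h : ExpandsUpTo 𝕜 Z nrm v c w wn Γ K) {k : ℕ}
    (hZ : IsNormedSubspace 𝕜 (Z k) (nrm k)) (hk : k < K) :
    ∀ᶠ n in atTop, nrm k (expRemainder 𝕜 v c w Γ k n) = Γ (k + 1) n := by
  filter_upwards [h.eventually_nrm_approx k hk] with n hn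
  rw [h.expRemainder_eq k hk, hZ.nrm_algebraMap_smul _ (h.approx_mem k hk n), hn, mul_one,
    abs_of_pos (h.coeff_pos k hk n)]

lemma eventually_expRemainder_ne_zero (h : ExpandsUpTo 𝕜 Z nrm v c w wn Γ K) {k : ℕ}
    (hZ : IsNormedSubspace 𝕜 (Z k) (nrm k)) (hk : k < K) :
    ∀ᶠ n in atTop, expRemainder 𝕜 v c w Γ k n ≠ 0 := by
  filter_upwards [h.eventually_nrm_expRemainder hZ hk] with n hn h0
  rw [h0, hZ.nrm_zero] at hn
  exact (h.coeff_pos k hk n).ne hn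

lemma tendsto_nrm_sub_center (h : ExpandsUpTo 𝕜 Z nrm v c w wn Γ K)
    (hZ : IsNormedSubspace 𝕜 (Z 0) (nrm 0)) (hK : 0 < K) :
    Tendsto (fun n => nrm 0 (v n - c)) atTop (𝓝 0) := by
  refine h.tendsto_coeff_one.congr' ?_
  filter_upwards [h.eventually_nrm_expRemainder hZ hK] with n hn
  rw [← hn, expRemainder_zero]

lemma mem_zero (h : ExpandsUpTo 𝕜 Z nrm v c w wn Γ K)
    (hZ : IsNormedSubspace 𝕜 (Z 0) (nrm 0)) (hK : 0 < K) (n : ℕ) : v n ∈ Z 0 := by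
  have hv := h.expRemainder_eq 0 hK n
  rw [expRemainder_zero, sub_eq_iff_eq_add'] at hv
  exact hv ▸ hZ.add_mem h.center_mem (hZ.smul_mem _ (h.approx_mem 0 hK n))

lemma not_forall_eq (h : ExpandsUpTo 𝕜 Z nrm v c w wn Γ K)
    (hZ : IsNormedSubspace 𝕜 (Z 0) (nrm 0)) (hK : 0 < K) (c₀ : E) : ¬ ∀ n, v n = c₀ := by
  intro hv
  have hc : nrm 0 (c₀ - c) = 0 :=
    tendsto_nhds_unique tendsto_const_nhds
      (by simpa only [hv] using h.tendsto_nrm_sub_center hZ hK)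
  obtain ⟨n, hn⟩ := (h.eventually_nrm_expRemainder hZ hK).exists
  rw [expRemainder_zero, hv, hc] at hn
  exact (h.coeff_pos 0 hK n).ne hn

lemma center_eq (h : ExpandsUpTo 𝕜 Z nrm v c w wn Γ K)
    (h' : ExpandsUpTo 𝕜 Z nrm v c' w' wn' Γ' K')
    (hZ : IsNormedSubspace 𝕜 (Z 0) (nrm 0)) (hK : 0 < K) (hK' : 0 < K') : c = c' :=
  hZ.eq_of_tendsto (h.mem_zero hZ hK) h.center_mem h'.center_mem
    (h.tendsto_nrm_sub_center hZ hK) (h'.tendsto_nrm_sub_center hZ hK')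

lemma expRemainder_eventuallyEq_succ (h : ExpandsUpTo 𝕜 Z nrm v c w wn Γ K)
    (h' : ExpandsUpTo 𝕜 Z nrm v c' w' wn' Γ' K')
    (hZ : ∀ k, IsNormedSubspace 𝕜 (Z k) (nrm k)) (hmono : Monotone Z) {k : ℕ}
    (hk : k < K) (hk' : k < K')
    (hR : expRemainder 𝕜 v c w Γ k =ᶠ[atTop] expRemainder 𝕜 v c' w' Γ' k) :
    expRemainder 𝕜 v c w Γ (k + 1) =ᶠ[atTop] expRemainder 𝕜 v c' w' Γ' (k + 1) := by
  have hsame : ∀ᶠ n in atTop, Γ (k + 1) n = Γ' (k + 1) n ∧ wn (k + 1) n = wn' (k + 1) n := by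
    filter_upwards [hR, h.eventually_nrm_approx k hk, h'.eventually_nrm_approx k hk']
      with n hn h1 h1'
    rw [h.expRemainder_eq k hk, h'.expRemainder_eq k hk'] at hn
    exact (hZ k).eq_of_smul_eq_smul (h.approx_mem k hk n) (h'.approx_mem k hk' n) h1 h1'
      (h.coeff_pos k hk n) (h'.coeff_pos k hk' n) hn
  have hw : w (k + 1) = w' (k + 1) := by
    refine (hZ (k + 1)).eq_of_tendsto (fun n => hmono k.le_succ (h.approx_mem k hk n))
      (h.term_mem k hk) (h'.term_mem k hk') (h.tendsto_approx k hk)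
      ((h'.tendsto_approx k hk').congr' ?_)
    filter_upwards [hsame] with n hn
    rw [hn.2]
  filter_upwards [hR, hsame] with n hn hn'
  rw [expRemainder_succ, expRemainder_succ, hn, hn'.1, hw]

lemma expRemainder_eventuallyEq (h : ExpandsUpTo 𝕜 Z nrm v c w wn Γ K)
    (h' : ExpandsUpTo 𝕜 Z nrm v c' w' wn' Γ' K')
    (hZ : ∀ k, IsNormedSubspace 𝕜 (Z k) (nrm k)) (hmono : Monotone Z)
    (hK : 0 < K) (hK' : 0 < K') {k : ℕ} (hk : k ≤ K) (hk' : k ≤ K') :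
    expRemainder 𝕜 v c w Γ k =ᶠ[atTop] expRemainder 𝕜 v c' w' Γ' k := by
  induction k with
  | zero =>
    refine .of_eq (funext fun n => ?_)
    rw [expRemainder_zero, expRemainder_zero, h.center_eq h' (hZ 0) hK hK']
  | succ k ih =>
    exact h.expRemainder_eventuallyEq_succ h' hZ hmono hk hk' (ih (by omega) (by omega))

end ExpandsUpTo

end Expansion

theorem strict_expansion_cases_mutually_exclusive_general
    (𝕜 : Type*) [RCLike 𝕜] {E : Type*} [AddCommGroup E] [Module 𝕜 E]
    (Z : ℕ → Set E) (nrm : ℕ → E → ℝ) (hfam : IsNestedFamily 𝕜 Z nrm)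
    (v : ℕ → E) :
    (¬ ((∃ c : E, StrictCaseI Z v c) ∧
        ∃ (c : E) (K0 : ℕ) (w : ℕ → E) (wn : ℕ → ℕ → E) (Γ : ℕ → ℕ → ℝ),
          StrictCaseII 𝕜 Z nrm v c K0 w wn Γ)) ∧
    (¬ ((∃ c : E, StrictCaseI Z v c) ∧
        ∃ (c : E) (w : ℕ → E) (wn : ℕ → ℕ → E) (Γ : ℕ → ℕ → ℝ) (Nk : ℕ → ℕ),
          StrictCaseIII 𝕜 Z nrm v c w wn Γ Nk)) ∧
    ¬ ((∃ (c : E) (K0 : ℕ) (w : ℕ → E) (wn : ℕ → ℕ → E) (Γ : ℕ → ℕ → ℝ),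
          StrictCaseII 𝕜 Z nrm v c K0 w wn Γ) ∧
        ∃ (c : E) (w : ℕ → E) (wn : ℕ → ℕ → E) (Γ : ℕ → ℕ → ℝ) (Nk : ℕ → ℕ),
          StrictCaseIII 𝕜 Z nrm v c w wn Γ Nk) := by
  have hZ := hfam.1
  have hmono : Monotone Z := monotone_nat_of_le_succ hfam.2.1
  refine ⟨?_, ?_, ?_⟩
  · rintro ⟨⟨c₀, hI⟩, c, K0, w, wn, Γ, hII⟩
    exact hII.expandsUpTo.not_forall_eq (hZ 0) hII.1 c₀ hI.2
  · rintro ⟨⟨c₀, hI⟩, c, w, wn, Γ, Nk, hIII⟩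
    exact (hIII.expandsUpTo 1).not_forall_eq (hZ 0) one_pos c₀ hI.2
  · rintro ⟨⟨c, K0, w, wn, Γ, hII⟩, c', w', wn', Γ', Nk, hIII⟩
    have hK0 : 0 < K0 := hII.1
    have hexp := hIII.expandsUpTo (K0 + 1)
    have hR := hII.expandsUpTo.expRemainder_eventuallyEq hexp hZ hmono hK0 K0.succ_pos
      le_rfl K0.le_succ
    obtain ⟨n, hn, hne⟩ := (hR.and (hexp.eventually_expRemainder_ne_zero (hZ K0)
      K0.lt_succ_self)).exists
    exact hne (hn ▸ hII.expRemainder_eq_zero n)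

/-- the three cases (I), (II), (III) of a strict expansion are mutually
exclusive. -/
theorem strict_expansion_cases_mutually_exclusive
    (𝕜 : Type*) [RCLike 𝕜] {E : Type*} [AddCommGroup E] [Module 𝕜 E]
    (Z : ℕ → Set E) (nrm : ℕ → E → ℝ) (hfam : IsNestedFamily 𝕜 Z nrm)
    (v : ℕ → E) (hv : ∀ n, v n ∈ Z 0) :
    (¬ ((∃ c : E, StrictCaseI Z v c) ∧
        ∃ (c : E) (K0 : ℕ) (w : ℕ → E) (wn : ℕ → ℕ → E) (Γ : ℕ → ℕ → ℝ),
          StrictCaseII 𝕜 Z nrm v c K0 w wn Γ)) ∧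
    (¬ ((∃ c : E, StrictCaseI Z v c) ∧
        ∃ (c : E) (w : ℕ → E) (wn : ℕ → ℕ → E) (Γ : ℕ → ℕ → ℝ) (Nk : ℕ → ℕ),
          StrictCaseIII 𝕜 Z nrm v c w wn Γ Nk)) ∧
    ¬ ((∃ (c : E) (K0 : ℕ) (w : ℕ → E) (wn : ℕ → ℕ → E) (Γ : ℕ → ℕ → ℝ),
          StrictCaseII 𝕜 Z nrm v c K0 w wn Γ) ∧
        ∃ (c : E) (w : ℕ → E) (wn : ℕ → ℕ → E) (Γ : ℕ → ℕ → ℝ) (Nk : ℕ → ℕ),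
          StrictCaseIII 𝕜 Z nrm v c w wn Γ Nk) :=
  strict_expansion_cases_mutually_exclusive_general 𝕜 Z nrm hfam v
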